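/- arXiv:0812.0053 — 2 statements merged into one kernel-verified Lean document; each statement's English description precedes it below -/
import Mathlib

section
/- Suppose f, ξ, η, ζ are C¹ on an open set D ⊆ ℝ², and suppose that for every C¹ curve c : [a,b] → D with nonvanishing velocity the length function t ↦ ∫_a^b ‖γ'(s) + t (v∘c)'(s)‖ ds, where γ(s) = (c₁(s), c₂(s), f(c(s))) and v = (ξ, η, ζ), has derivative 0 at t = 0. Then at every point of D the equations x_u·v_u = 0, x_u·v_v + x_v·v_u = 0, and x_v·v_v = 0 hold, i.e. ξ_u = −f_u ζ_u, ξ_v + η_u = −f_v ζ_u − f_u ζ_v, and η_v = −f_v ζ_v on D. -/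
noncomputable section
open scoped RealInnerProductSpace

/-- ℝ³ with the Euclidean norm and scalar product. -/
abbrev E3 := EuclideanSpace ℝ (Fin 3)

/-- The vector (a, b, c) ∈ ℝ³. -/
def vec3 (a b c : ℝ) : E3 := (WithLp.equiv 2 (Fin 3 → ℝ)).symm ![a, b, c]

/-- The cross product in ℝ³. -/
def cross3 (x y : E3) : E3 :=
  vec3 (x 1 * y 2 - x 2 * y 1) (x 2 * y 0 - x 0 * y 2) (x 0 * y 1 - x 1 * y 0)

/-- Partial derivative in the first variable `u`. -/
def pu {F : Type*} [NormedAddCommGroup F] [NormedSpace ℝ F] (g : ℝ × ℝ → F) (z : ℝ × ℝ) : F :=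
  fderiv ℝ g z (1, 0)

/-- Partial derivative in the second variable `v`. -/
def pv {F : Type*} [NormedAddCommGroup F] [NormedSpace ℝ F] (g : ℝ × ℝ → F) (z : ℝ × ℝ) : F :=
  fderiv ℝ g z (0, 1)

/-- The infinitesimal-flex equations (3): ξ_u = −f_u ζ_u,
ξ_v + η_u = −f_v ζ_u − f_u ζ_v, η_v = −f_v ζ_v. -/
def FlexEqns (f ξ η ζ : ℝ × ℝ → ℝ) (z : ℝ × ℝ) : Prop :=
  pu ξ z = -(pu f z * pu ζ z) ∧
  pv ξ z + pu η z = -(pv f z * pu ζ z) - pu f z * pv ζ z ∧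
  pv η z = -(pv f z * pv ζ z)

/-!
By convexity of the norm, `‖γ' + t V'‖ ≥ ‖γ'‖ + t ⟪γ', V'⟫ / ‖γ'‖`, so stationarity of the length
at `t = 0` forces `∫ ⟪γ', V'⟫ / ‖γ'‖ = 0` along every regular curve. Along all subsegments of a
straight line `s ↦ z + s • w` this makes the continuous integrand vanish at `z`, that is
`dx(w) · dv(w) = 0` for every direction `w ≠ 0`. Polarising with `w = (1,0), (0,1), (1,1)` gives the
three equations.
-/

open Set Topology MeasureTheory

section Analysis

variable {E : Type*}

theorem eq_zero_of_forall_intervalIntegral_eq_zero [NormedAddCommGroup E] [NormedSpace ℝ E]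
    [CompleteSpace E] {g : ℝ → E} {S : Set ℝ} (hS : IsOpen S) (hg : ContinuousOn g S) {x : ℝ}
    (hx : x ∈ S) (h : ∀ a b, a < b → Icc a b ⊆ S → ∫ s in a..b, g s = 0) : g x = 0 := by
  obtain ⟨ε, hε, hball⟩ := Metric.isOpen_iff.mp hS x hx
  have hzero : (fun y => ∫ s in x..y, g s) =ᶠ[𝓝 x] fun _ => 0 := by
    filter_upwards [Metric.ball_mem_nhds x hε] with y hy
    have hsub : uIcc x y ⊆ S := (Real.ball_eq_Ioo x ε ▸ ordConnected_Ioo).uIcc_subset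
      (Metric.mem_ball_self hε) hy |>.trans hball
    rcases lt_trichotomy x y with hxy | rfl | hxy
    · exact h x y hxy (uIcc_of_le hxy.le ▸ hsub)
    · exact intervalIntegral.integral_same
    · rw [intervalIntegral.integral_symm, h y x hxy (uIcc_of_ge hxy.le ▸ hsub), neg_zero]
  have hderiv : HasDerivAt (fun y => ∫ s in x..y, g s) (g x) x :=
    intervalIntegral.integral_hasDerivAt_right IntervalIntegrable.refl
      (hg.stronglyMeasurableAtFilter hS x hx) (hg.continuousAt (hS.mem_nhds hx))
  exact hderiv.unique ((hasDerivAt_const x 0).congr_of_eventuallyEq hzero)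

variable [NormedAddCommGroup E] [InnerProductSpace ℝ E]

/-- At `x = 0` the slope `⟪x, y⟫ / ‖x‖` is the junk value `0`, and the bound still holds. -/
theorem add_mul_inner_div_norm_le_norm_add_smul (x y : E) (t : ℝ) :
    ‖x‖ + t * (⟪x, y⟫ / ‖x‖) ≤ ‖x + t • y‖ := by
  rcases eq_or_ne x 0 with rfl | hx
  · simpa [norm_smul] using by positivity
  have hx' : ‖x‖ ≠ 0 := norm_ne_zero_iff.mpr hx
  calc ‖x‖ + t * (⟪x, y⟫ / ‖x‖) = ⟪‖x‖⁻¹ • x, x + t • y⟫ := by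
        rw [inner_add_right, real_inner_smul_left, real_inner_smul_left, real_inner_smul_right,
          real_inner_self_eq_norm_mul_norm]
        field_simp
    _ ≤ ‖‖x‖⁻¹ • x‖ * ‖x + t • y‖ := real_inner_le_norm _ _
    _ = ‖x + t • y‖ := by rw [norm_smul, norm_inv, norm_norm, inv_mul_cancel₀ hx', one_mul]

/-- The tangent-line bound makes `t ↦ L t - t * ∫ ⟪A, B⟫ / ‖A‖` minimal at `0`. -/
theorem integral_inner_div_norm_eq_zero_of_hasDerivAt {A B : ℝ → E} {a b : ℝ} (hab : a ≤ b)
    (hA : ContinuousOn A (Icc a b)) (hB : ContinuousOn B (Icc a b))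
    (hA0 : ∀ s ∈ Icc a b, A s ≠ 0)
    (hL : HasDerivAt (fun t : ℝ => ∫ s in a..b, ‖A s + t • B s‖) 0 0) :
    ∫ s in a..b, ⟪A s, B s⟫ / ‖A s‖ = 0 := by
  set L := fun t : ℝ => ∫ s in a..b, ‖A s + t • B s‖
  set I := ∫ s in a..b, ⟪A s, B s⟫ / ‖A s‖
  have hLint : ∀ t : ℝ, IntervalIntegrable (fun s => ‖A s + t • B s‖) volume a b := fun t =>
    ((hA.add (hB.const_smul t)).norm).intervalIntegrable_of_Icc hab
  have hgint : IntervalIntegrable (fun s => ⟪A s, B s⟫ / ‖A s‖) volume a b :=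
    ContinuousOn.intervalIntegrable_of_Icc hab
      ((hA.inner hB).div hA.norm fun s hs => norm_ne_zero_iff.mpr (hA0 s hs))
  have hlow : ∀ t, L 0 + t * I ≤ L t := fun t =>
    calc L 0 + t * I = ∫ s in a..b, (‖A s‖ + t * (⟪A s, B s⟫ / ‖A s‖)) := by
          simp only [L, I, zero_smul, add_zero]
          rw [intervalIntegral.integral_add (by simpa using hLint 0) (hgint.const_mul t),
            intervalIntegral.integral_const_mul]
      _ ≤ L t := intervalIntegral.integral_mono_on hab
          ((by simpa using hLint 0 : IntervalIntegrable (fun s => ‖A s‖) volume a b).add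
            (hgint.const_mul t)) (hLint t)
          fun s _ => add_mul_inner_div_norm_le_norm_add_smul (A s) (B s) t
  have hmin : IsLocalMin (fun t => L t - t * I) 0 := .of_forall fun t => by
    simp only [zero_mul, sub_zero]
    linarith [hlow t]
  linarith [hmin.hasDerivAt_eq_zero (hL.sub (hasDerivAt_mul_const I))]

end Analysis

lemma vec3_eq_sum (a b c : ℝ) :
    vec3 a b c = a • vec3 1 0 0 + b • vec3 0 1 0 + c • vec3 0 0 1 := by
  ext i
  fin_cases i <;> simp [vec3]

lemma inner_vec3 (a b c d e f : ℝ) : ⟪vec3 a b c, vec3 d e f⟫ = a * d + b * e + c * f := by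
  simp [vec3, EuclideanSpace.inner_eq_star_dotProduct]
  ring

lemma vec3_ne_zero {a b c : ℝ} (h : (a, b) ≠ 0) : vec3 a b c ≠ 0 := by
  contrapose! h
  have h0 : ∀ i, vec3 a b c i = 0 := fun i => by rw [h]; rfl
  exact Prod.ext (by simpa [vec3] using h0 0) (by simpa [vec3] using h0 1)

lemma hasDerivAt_vec3 {g₁ g₂ g₃ : ℝ → ℝ} {g₁' g₂' g₃' s : ℝ} (h₁ : HasDerivAt g₁ g₁' s)
    (h₂ : HasDerivAt g₂ g₂' s) (h₃ : HasDerivAt g₃ g₃' s) :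
    HasDerivAt (fun s => vec3 (g₁ s) (g₂ s) (g₃ s)) (vec3 g₁' g₂' g₃') s := by
  rw [funext fun s => vec3_eq_sum (g₁ s) (g₂ s) (g₃ s), vec3_eq_sum g₁']
  exact ((h₁.smul_const _).add (h₂.smul_const _)).add (h₃.smul_const _)

lemma continuousOn_vec3 {α : Type*} [TopologicalSpace α] {g₁ g₂ g₃ : α → ℝ} {S : Set α}
    (h₁ : ContinuousOn g₁ S) (h₂ : ContinuousOn g₂ S) (h₃ : ContinuousOn g₃ S) :
    ContinuousOn (fun x => vec3 (g₁ x) (g₂ x) (g₃ x)) S := by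
  rw [funext fun x => vec3_eq_sum (g₁ x) (g₂ x) (g₃ x)]
  exact ((h₁.smul continuousOn_const).add (h₂.smul continuousOn_const)).add
    (h₃.smul continuousOn_const)

section Line

variable {F G : Type*} [NormedAddCommGroup F] [NormedSpace ℝ F] [NormedAddCommGroup G]
  [NormedSpace ℝ G] {g : F → G} {z w : F}

lemma hasDerivAt_comp_add_smul {s : ℝ} (hg : DifferentiableAt ℝ g (z + s • w)) :
    HasDerivAt (fun s : ℝ => g (z + s • w)) (fderiv ℝ g (z + s • w) w) s := by
  have hline : HasDerivAt (fun s : ℝ => z + s • w) w s := by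
    simpa using ((hasDerivAt_id s).smul_const w).const_add z
  exact hg.hasFDerivAt.comp_hasDerivAt s hline

lemma continuousOn_fderiv_comp_add_smul_apply {D : Set F} (hD : IsOpen D)
    (hg : ContDiffOn ℝ 1 g D) :
    ContinuousOn (fun s : ℝ => fderiv ℝ g (z + s • w) w) {s | z + s • w ∈ D} :=
  ((hg.continuousOn_fderiv_of_isOpen hD le_rfl).comp
    (Continuous.continuousOn (by fun_prop : Continuous fun s : ℝ => z + s • w))
    fun _ hs => hs).clm_apply continuousOn_const

end Line

def IsInfinitesimalFlex (D : Set (ℝ × ℝ)) (f ξ η ζ : ℝ × ℝ → ℝ) : Prop :=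
  ∀ a b : ℝ, a < b → ∀ c : ℝ → ℝ × ℝ,
    ContDiffOn ℝ 1 c (Icc a b) →
    (∀ s ∈ Icc a b, c s ∈ D) →
    (∀ s ∈ Icc a b,
      derivWithin (fun s => vec3 (c s).1 (c s).2 (f (c s))) (Icc a b) s ≠ 0) →
    HasDerivAt (fun t : ℝ => ∫ s in a..b,
      ‖derivWithin (fun s => vec3 (c s).1 (c s).2 (f (c s))) (Icc a b) s
        + t • derivWithin (fun s => vec3 (ξ (c s)) (η (c s)) (ζ (c s)))
            (Icc a b) s‖) 0 0

theorem IsInfinitesimalFlex.integral_inner_div_norm_eq_zero {D : Set (ℝ × ℝ)}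
    {f ξ η ζ : ℝ × ℝ → ℝ} (hflex : IsInfinitesimalFlex D f ξ η ζ) {a b : ℝ} (hab : a < b)
    {c : ℝ → ℝ × ℝ} (hc : ContDiffOn ℝ 1 c (Icc a b)) (hcD : ∀ s ∈ Icc a b, c s ∈ D)
    {A B : ℝ → E3}
    (hA : ∀ s ∈ Icc a b, HasDerivAt (fun s => vec3 (c s).1 (c s).2 (f (c s))) (A s) s)
    (hB : ∀ s ∈ Icc a b, HasDerivAt (fun s => vec3 (ξ (c s)) (η (c s)) (ζ (c s))) (B s) s)
    (hAc : ContinuousOn A (Icc a b)) (hBc : ContinuousOn B (Icc a b))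
    (hA0 : ∀ s ∈ Icc a b, A s ≠ 0) :
    ∫ s in a..b, ⟪A s, B s⟫ / ‖A s‖ = 0 := by
  have hud := uniqueDiffOn_Icc hab
  have hdA : ∀ s ∈ Icc a b, derivWithin (fun s => vec3 (c s).1 (c s).2 (f (c s))) (Icc a b) s
      = A s := fun s hs => (hA s hs).hasDerivWithinAt.derivWithin (hud s hs)
  have hdB : ∀ s ∈ Icc a b, derivWithin (fun s => vec3 (ξ (c s)) (η (c s)) (ζ (c s))) (Icc a b) s
      = B s := fun s hs => (hB s hs).hasDerivWithinAt.derivWithin (hud s hs)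
  refine integral_inner_div_norm_eq_zero_of_hasDerivAt hab.le hAc hBc hA0 ?_
  convert hflex a b hab c hc hcD (fun s hs => hdA s hs ▸ hA0 s hs) using 2
  refine intervalIntegral.integral_congr fun s hs => ?_
  rw [uIcc_of_le hab.le] at hs
  simp only [hdA s hs, hdB s hs]

theorem IsInfinitesimalFlex.inner_fderiv_eq_zero {D : Set (ℝ × ℝ)} {f ξ η ζ : ℝ × ℝ → ℝ}
    (hflex : IsInfinitesimalFlex D f ξ η ζ) (hD : IsOpen D) (hf : ContDiffOn ℝ 1 f D)
    (hξ : ContDiffOn ℝ 1 ξ D) (hη : ContDiffOn ℝ 1 η D) (hζ : ContDiffOn ℝ 1 ζ D)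
    {z : ℝ × ℝ} (hz : z ∈ D) {w : ℝ × ℝ} (hw : w ≠ 0) :
    ⟪vec3 w.1 w.2 (fderiv ℝ f z w),
      vec3 (fderiv ℝ ξ z w) (fderiv ℝ η z w) (fderiv ℝ ζ z w)⟫ = 0 := by
  set c : ℝ → ℝ × ℝ := fun s => z + s • w
  set S : Set ℝ := {s | c s ∈ D}
  have hS : IsOpen S := hD.preimage (by fun_prop)
  have hdiff : ∀ {g : ℝ × ℝ → ℝ}, ContDiffOn ℝ 1 g D → ∀ s ∈ S,
      HasDerivAt (fun s => g (c s)) (fderiv ℝ g (c s) w) s := fun hg s hs =>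
    hasDerivAt_comp_add_smul ((hg.differentiableOn one_ne_zero).differentiableAt (hD.mem_nhds hs))
  set A : ℝ → E3 := fun s => vec3 w.1 w.2 (fderiv ℝ f (c s) w)
  set B : ℝ → E3 := fun s => vec3 (fderiv ℝ ξ (c s) w) (fderiv ℝ η (c s) w) (fderiv ℝ ζ (c s) w)
  have hA : ∀ s ∈ S, HasDerivAt (fun s => vec3 (c s).1 (c s).2 (f (c s))) (A s) s := fun s hs =>
    hasDerivAt_vec3
      ((hasDerivAt_comp_add_smul differentiableAt_fst).congr_deriv (by rw [fderiv_fst]; rfl))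
      ((hasDerivAt_comp_add_smul differentiableAt_snd).congr_deriv (by rw [fderiv_snd]; rfl))
      (hdiff hf s hs)
  have hB : ∀ s ∈ S, HasDerivAt (fun s => vec3 (ξ (c s)) (η (c s)) (ζ (c s))) (B s) s :=
    fun s hs => hasDerivAt_vec3 (hdiff hξ s hs) (hdiff hη s hs) (hdiff hζ s hs)
  have hAc : ContinuousOn A S := continuousOn_vec3 continuousOn_const continuousOn_const
    (continuousOn_fderiv_comp_add_smul_apply hD hf)
  have hBc : ContinuousOn B S := continuousOn_vec3 (continuousOn_fderiv_comp_add_smul_apply hD hξ)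
    (continuousOn_fderiv_comp_add_smul_apply hD hη) (continuousOn_fderiv_comp_add_smul_apply hD hζ)
  have hA0 : ∀ s, A s ≠ 0 := fun s => vec3_ne_zero hw
  suffices h0 : ⟪A 0, B 0⟫ / ‖A 0‖ = 0 by
    simpa [c, A, B] using (div_eq_zero_iff.mp h0).resolve_right (norm_ne_zero_iff.mpr (hA0 0))
  refine eq_zero_of_forall_intervalIntegral_eq_zero hS
    ((hAc.inner hBc).div hAc.norm fun s _ => norm_ne_zero_iff.mpr (hA0 s)) (by simpa [S, c])
    fun a b hab hsub => ?_
  exact hflex.integral_inner_div_norm_eq_zero hab (by fun_prop) hsub (fun s hs => hA s (hsub hs))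
    (fun s hs => hB s (hsub hs)) (hAc.mono hsub) (hBc.mono hsub) fun s _ => hA0 s

/-- if (f,ξ,η,ζ) are C¹ on the open set D and the length of every
C¹ curve on the graph surface (with nonvanishing velocity) is stationary at t = 0
under the deformation by v = (ξ,η,ζ), then the infinitesimal-flex equations
ξ_u = −f_u ζ_u, ξ_v + η_u = −f_v ζ_u − f_u ζ_v, η_v = −f_v ζ_v hold on D. -/
theorem stmt2 (D : Set (ℝ × ℝ)) (hD : IsOpen D)
    (f ξ η ζ : ℝ × ℝ → ℝ)
    (hf : ContDiffOn ℝ 1 f D) (hξ : ContDiffOn ℝ 1 ξ D)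
    (hη : ContDiffOn ℝ 1 η D) (hζ : ContDiffOn ℝ 1 ζ D)
    (hstat : ∀ a b : ℝ, a < b → ∀ c : ℝ → ℝ × ℝ,
      ContDiffOn ℝ 1 c (Set.Icc a b) →
      (∀ s ∈ Set.Icc a b, c s ∈ D) →
      (∀ s ∈ Set.Icc a b,
        derivWithin (fun s => vec3 (c s).1 (c s).2 (f (c s))) (Set.Icc a b) s ≠ 0) →
      HasDerivAt (fun t : ℝ => ∫ s in a..b,
        ‖derivWithin (fun s => vec3 (c s).1 (c s).2 (f (c s))) (Set.Icc a b) s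
          + t • derivWithin (fun s => vec3 (ξ (c s)) (η (c s)) (ζ (c s)))
              (Set.Icc a b) s‖) 0 0) :
    ∀ z ∈ D, FlexEqns f ξ η ζ z := by
  intro z hz
  have hflex : IsInfinitesimalFlex D f ξ η ζ := hstat
  have h10 := hflex.inner_fderiv_eq_zero hD hf hξ hη hζ hz (w := (1, 0)) (by simp)
  have h01 := hflex.inner_fderiv_eq_zero hD hf hξ hη hζ hz (w := (0, 1)) (by simp)
  have h11 := hflex.inner_fderiv_eq_zero hD hf hξ hη hζ hz (w := (1, 1)) (by simp)
  have hsplit : ∀ g : ℝ × ℝ → ℝ, fderiv ℝ g z (1, 1) = fderiv ℝ g z (1, 0) + fderiv ℝ g z (0, 1) :=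
    fun g => by rw [← map_add]; norm_num
  simp only [inner_vec3, hsplit] at h10 h01 h11
  simp only [FlexEqns, pu, pv]
  refine ⟨by linear_combination h10, by linear_combination h11 - h10 - h01,
    by linear_combination h01⟩
end
end

section
/- Let f, ξ, η, ζ : ℝ² → ℝ be C^∞ functions that are doubly periodic with periods p > 0 and q > 0 (i.e. g(u + p, v) = g(u, v) = g(u, v + q) for g ∈ {f, ξ, η, ζ} and all (u,v)), and suppose they satisfy the infinitesimal-flex equations ξ_u = −f_u ζ_u, ξ_v + η_u = −f_v ζ_u − f_u ζ_v, η_v = −f_v ζ_v everywhere. Then ∬_{[0,p]×[0,q]} [(1 + f_v²) ζ_uu − 2 f_u f_v ζ_uv + (1 + f_u²) ζ_vv] du dv = 0. -/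
noncomputable section
open scoped RealInnerProductSpace

/-! ### Auxiliary lemmas -/

section Helpers

variable {g h : ℝ × ℝ → ℝ} {z : ℝ × ℝ}

lemma contDiff_pu (hg : ContDiff ℝ (⊤ : ℕ∞) g) : ContDiff ℝ (⊤ : ℕ∞) (pu g) := by
  unfold pu; exact (hg.fderiv_right (by simp)).clm_apply contDiff_const

lemma contDiff_pv (hg : ContDiff ℝ (⊤ : ℕ∞) g) : ContDiff ℝ (⊤ : ℕ∞) (pv g) := by
  unfold pv; exact (hg.fderiv_right (by simp)).clm_apply contDiff_const

lemma pu_add (hg : DifferentiableAt ℝ g z) (hh : DifferentiableAt ℝ h z) :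
    pu (fun w => g w + h w) z = pu g z + pu h z := by
  simp [pu, fderiv_fun_add hg hh]

lemma pu_sub (hg : DifferentiableAt ℝ g z) (hh : DifferentiableAt ℝ h z) :
    pu (fun w => g w - h w) z = pu g z - pu h z := by
  simp [pu, fderiv_fun_sub hg hh]

lemma pu_mul (hg : DifferentiableAt ℝ g z) (hh : DifferentiableAt ℝ h z) :
    pu (fun w => g w * h w) z = pu g z * h z + g z * pu h z := by
  simp [pu, fderiv_fun_mul hg hh]; ring

lemma pv_add (hg : DifferentiableAt ℝ g z) (hh : DifferentiableAt ℝ h z) :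
    pv (fun w => g w + h w) z = pv g z + pv h z := by
  simp [pv, fderiv_fun_add hg hh]

lemma pv_sub (hg : DifferentiableAt ℝ g z) (hh : DifferentiableAt ℝ h z) :
    pv (fun w => g w - h w) z = pv g z - pv h z := by
  simp [pv, fderiv_fun_sub hg hh]

lemma pv_mul (hg : DifferentiableAt ℝ g z) (hh : DifferentiableAt ℝ h z) :
    pv (fun w => g w * h w) z = pv g z * h z + g z * pv h z := by
  simp [pv, fderiv_fun_mul hg hh]; ring

/-- Symmetry of second partial derivatives for smooth functions. -/
lemma pv_pu_symm (hg : ContDiff ℝ (⊤ : ℕ∞) g) (z : ℝ × ℝ) : pv (pu g) z = pu (pv g) z := by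
  have hd : DifferentiableAt ℝ (fderiv ℝ g) z :=
    ((hg.fderiv_right (m := (⊤ : ℕ∞)) (by simp)).differentiable (by simp)) z
  have h1 : ∀ w y : ℝ × ℝ, fderiv ℝ (fun x => fderiv ℝ g x w) z y
      = fderiv ℝ (fderiv ℝ g) z y w := by
    intro w y
    rw [fderiv_clm_apply hd (differentiableAt_const w)]
    simp
  have hsymm := (hg.contDiffAt.isSymmSndFDerivAt (by rw [minSmoothness_of_isRCLikeNormedField]; exact WithTop.coe_le_coe.mpr le_top) (x := z))
  show fderiv ℝ (fun x => fderiv ℝ g x (1, 0)) z (0, 1)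
      = fderiv ℝ (fun x => fderiv ℝ g x (0, 1)) z (1, 0)
  rw [h1, h1]
  exact hsymm _ _

/-- The derivative of a function invariant under translation by `c` is invariant as well. -/
lemma fderiv_shift (hg : Differentiable ℝ g) (c : ℝ × ℝ)
    (hgp : ∀ x : ℝ × ℝ, g (x + c) = g x) (z : ℝ × ℝ) :
    fderiv ℝ g (z + c) = fderiv ℝ g z := by
  have h1 : HasFDerivAt (fun x : ℝ × ℝ => g (x + c)) (fderiv ℝ g (z + c)) z := by
    have := (hg (z + c)).hasFDerivAt.comp z ((hasFDerivAt_id z).add_const c)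
    simpa [Function.comp_def] using this
  have h2 : (fun x : ℝ × ℝ => g (x + c)) = g := funext hgp
  rw [h2] at h1
  exact (h1.fderiv).symm

lemma pu_shift (hg : Differentiable ℝ g) {c : ℝ × ℝ}
    (hgp : ∀ x : ℝ × ℝ, g (x + c) = g x) (z : ℝ × ℝ) : pu g (z + c) = pu g z := by
  unfold pu; rw [fderiv_shift hg c hgp]

lemma pv_shift (hg : Differentiable ℝ g) {c : ℝ × ℝ}
    (hgp : ∀ x : ℝ × ℝ, g (x + c) = g x) (z : ℝ × ℝ) : pv g (z + c) = pv g z := by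
  unfold pv; rw [fderiv_shift hg c hgp]

end Helpers

/-- First component of the divergence field. -/
def Afun (f ξ η ζ : ℝ × ℝ → ℝ) : ℝ × ℝ → ℝ := fun z =>
  pu ζ z + pv f z * pv f z * pu ζ z - pu f z * pv f z * pv ζ z
    - pv (pv f) z * ξ z + pu (pv f) z * η z

/-- Second component of the divergence field. -/
def Bfun (f ξ η ζ : ℝ × ℝ → ℝ) : ℝ × ℝ → ℝ := fun z =>
  pv ζ z + pu f z * pu f z * pv ζ z - pu f z * pv f z * pu ζ z
    + pu (pv f) z * ξ z - pu (pu f) z * η z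

/-- The integrand is the divergence `∂_u A + ∂_v B`. -/
lemma key_divergence (f ξ η ζ : ℝ × ℝ → ℝ)
    (hf : ContDiff ℝ (⊤ : ℕ∞) f) (hξ : ContDiff ℝ (⊤ : ℕ∞) ξ)
    (hη : ContDiff ℝ (⊤ : ℕ∞) η) (hζ : ContDiff ℝ (⊤ : ℕ∞) ζ)
    (hflex : ∀ z : ℝ × ℝ, FlexEqns f ξ η ζ z) (z : ℝ × ℝ) :
    pu (Afun f ξ η ζ) z + pv (Bfun f ξ η ζ) z =
      (1 + pv f z ^ 2) * pu (pu ζ) z - 2 * pu f z * pv f z * pv (pu ζ) z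
        + (1 + pu f z ^ 2) * pv (pv ζ) z := by
  have hfu : ContDiff ℝ (⊤ : ℕ∞) (pu f) := contDiff_pu hf
  have hfv : ContDiff ℝ (⊤ : ℕ∞) (pv f) := contDiff_pv hf
  have hζu : ContDiff ℝ (⊤ : ℕ∞) (pu ζ) := contDiff_pu hζ
  have hζv : ContDiff ℝ (⊤ : ℕ∞) (pv ζ) := contDiff_pv hζ
  have hfuu : ContDiff ℝ (⊤ : ℕ∞) (pu (pu f)) := contDiff_pu hfu
  have hfuv : ContDiff ℝ (⊤ : ℕ∞) (pu (pv f)) := contDiff_pu hfv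
  have hfvv : ContDiff ℝ (⊤ : ℕ∞) (pv (pv f)) := contDiff_pv hfv
  have d0 : Differentiable ℝ ξ := hξ.differentiable (by simp)
  have d1 : Differentiable ℝ η := hη.differentiable (by simp)
  have d2 : Differentiable ℝ (pu f) := hfu.differentiable (by simp)
  have d3 : Differentiable ℝ (pv f) := hfv.differentiable (by simp)
  have d4 : Differentiable ℝ (pu ζ) := hζu.differentiable (by simp)
  have d5 : Differentiable ℝ (pv ζ) := hζv.differentiable (by simp)
  have d6 : Differentiable ℝ (pu (pu f)) := hfuu.differentiable (by simp)
  have d7 : Differentiable ℝ (pu (pv f)) := hfuv.differentiable (by simp)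
  have d8 : Differentiable ℝ (pv (pv f)) := hfvv.differentiable (by simp)
  obtain ⟨h1, h2, h3⟩ := hflex z
  have e1 : pv (pu f) = pu (pv f) := funext (pv_pu_symm hf)
  have e2 : pv (pu ζ) = pu (pv ζ) := funext (pv_pu_symm hζ)
  have e3 : pv (pu (pv f)) = pu (pv (pv f)) := funext (pv_pu_symm hfv)
  have e4 : pv (pu (pu f)) = pu (pv (pu f)) := funext (pv_pu_symm hfu)
  have hA : Afun f ξ η ζ = fun z => pu ζ z + pv f z * pv f z * pu ζ z
      - pu f z * pv f z * pv ζ z - pv (pv f) z * ξ z + pu (pv f) z * η z := rfl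
  have hB : Bfun f ξ η ζ = fun z => pv ζ z + pu f z * pu f z * pv ζ z
      - pu f z * pv f z * pu ζ z + pu (pv f) z * ξ z - pu (pu f) z * η z := rfl
  rw [hA, hB]
  simp (disch := fun_prop) only [pu_add, pu_sub, pu_mul, pv_add, pv_sub, pv_mul]
  rw [e2] at *
  rw [e4, e1] at *
  rw [e3] at *
  linear_combination (-(pv (pv f) z)) * h1 + (pu (pv f) z) * h2 + (-(pu (pu f) z)) * h3

/-- if f, ξ, η, ζ are smooth and doubly periodic with periods p > 0
and q > 0 and satisfy the infinitesimal-flex equations everywhere, then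
∬_{[0,p]×[0,q]} [(1+f_v²)ζ_uu − 2f_u f_v ζ_uv + (1+f_u²)ζ_vv] du dv = 0. -/
theorem stmt10 (p q : ℝ) (hp : 0 < p) (hq : 0 < q)
    (f ξ η ζ : ℝ × ℝ → ℝ)
    (hf : ContDiff ℝ (⊤ : ℕ∞) f) (hξ : ContDiff ℝ (⊤ : ℕ∞) ξ)
    (hη : ContDiff ℝ (⊤ : ℕ∞) η) (hζ : ContDiff ℝ (⊤ : ℕ∞) ζ)
    (hper : ∀ g ∈ ({f, ξ, η, ζ} : Set (ℝ × ℝ → ℝ)), ∀ u v : ℝ,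
      g (u + p, v) = g (u, v) ∧ g (u, v + q) = g (u, v))
    (hflex : ∀ z : ℝ × ℝ, FlexEqns f ξ η ζ z) :
    (∫ u in (0:ℝ)..p, ∫ v in (0:ℝ)..q,
        (1 + pv f (u, v) ^ 2) * pu (pu ζ) (u, v)
          - 2 * pu f (u, v) * pv f (u, v) * pv (pu ζ) (u, v)
          + (1 + pu f (u, v) ^ 2) * pv (pv ζ) (u, v)) = 0 := by
  classical
  -- notation
  set A := Afun f ξ η ζ with hAdef
  set B := Bfun f ξ η ζ with hBdef
  -- smoothness of atoms
  have hfu : ContDiff ℝ (⊤ : ℕ∞) (pu f) := contDiff_pu hf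
  have hfv : ContDiff ℝ (⊤ : ℕ∞) (pv f) := contDiff_pv hf
  have hζu : ContDiff ℝ (⊤ : ℕ∞) (pu ζ) := contDiff_pu hζ
  have hζv : ContDiff ℝ (⊤ : ℕ∞) (pv ζ) := contDiff_pv hζ
  have hfuu : ContDiff ℝ (⊤ : ℕ∞) (pu (pu f)) := contDiff_pu hfu
  have hfuv : ContDiff ℝ (⊤ : ℕ∞) (pu (pv f)) := contDiff_pu hfv
  have hfvv : ContDiff ℝ (⊤ : ℕ∞) (pv (pv f)) := contDiff_pv hfv
  have hA : ContDiff ℝ (⊤ : ℕ∞) A := by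
    rw [hAdef]
    exact ((((contDiff_pu hζ).add ((hfv.mul hfv).mul hζu)).sub
      ((hfu.mul hfv).mul hζv)).sub (hfvv.mul hξ)).add (hfuv.mul hη)
  have hB : ContDiff ℝ (⊤ : ℕ∞) B := by
    rw [hBdef]
    exact ((((contDiff_pv hζ).add ((hfu.mul hfu).mul hζv)).sub
      ((hfu.mul hfv).mul hζu)).add (hfuv.mul hξ)).sub (hfuu.mul hη)
  -- periodicity of atoms
  have per : ∀ g ∈ ({f, ξ, η, ζ} : Set (ℝ × ℝ → ℝ)),
      (∀ x : ℝ × ℝ, g (x + (p, 0)) = g x) ∧ (∀ x : ℝ × ℝ, g (x + (0, q)) = g x) := by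
    intro g hg
    constructor <;> rintro ⟨u, v⟩
    · simpa using (hper g hg u v).1
    · simpa using (hper g hg u v).2
  have pf := per f (by simp)
  have pξ := per ξ (by simp)
  have pη := per η (by simp)
  have pζ := per ζ (by simp)
  have df : Differentiable ℝ f := hf.differentiable (by simp)
  have dξ : Differentiable ℝ ξ := hξ.differentiable (by simp)
  have dη : Differentiable ℝ η := hη.differentiable (by simp)
  have dζ : Differentiable ℝ ζ := hζ.differentiable (by simp)
  have dfu : Differentiable ℝ (pu f) := hfu.differentiable (by simp)
  have dfv : Differentiable ℝ (pv f) := hfv.differentiable (by simp)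
  have dζu : Differentiable ℝ (pu ζ) := hζu.differentiable (by simp)
  have dζv : Differentiable ℝ (pv ζ) := hζv.differentiable (by simp)
  -- periodicity of A in u, of B in v
  have hAper : ∀ x : ℝ × ℝ, A (x + (p, 0)) = A x := by
    intro x
    show Afun f ξ η ζ (x + (p, 0)) = Afun f ξ η ζ x
    simp only [Afun, pu_shift dζ pζ.1, pv_shift df pf.1, pu_shift df pf.1,
      pv_shift dζ pζ.1, pv_shift dfv (pv_shift df pf.1), pu_shift dfv (pv_shift df pf.1),
      pξ.1, pη.1]
  have hBper : ∀ x : ℝ × ℝ, B (x + (0, q)) = B x := by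
    intro x
    show Bfun f ξ η ζ (x + (0, q)) = Bfun f ξ η ζ x
    simp only [Bfun, pv_shift dζ pζ.2, pu_shift df pf.2, pv_shift df pf.2,
      pu_shift dζ pζ.2, pu_shift dfv (pv_shift df pf.2), pu_shift dfu (pu_shift df pf.2),
      pξ.2, pη.2]
  -- rewrite the integrand as a divergence
  have hkey : ∀ u v : ℝ,
      (1 + pv f (u, v) ^ 2) * pu (pu ζ) (u, v)
          - 2 * pu f (u, v) * pv f (u, v) * pv (pu ζ) (u, v)
          + (1 + pu f (u, v) ^ 2) * pv (pv ζ) (u, v)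
        = pu A (u, v) + pv B (u, v) := fun u v =>
    (key_divergence f ξ η ζ hf hξ hη hζ hflex (u, v)).symm
  simp only [hkey]
  -- continuity facts
  have hcA : Continuous (pu A) := (contDiff_pu hA).continuous
  have hcB : Continuous (pv B) := (contDiff_pv hB).continuous
  -- FTC in v for B
  have hBftc : ∀ u : ℝ, (∫ v in (0:ℝ)..q, pv B (u, v)) = 0 := by
    intro u
    have hderiv : ∀ v : ℝ, HasDerivAt (fun v => B (u, v)) (pv B (u, v)) v := by
      intro v
      have h1 : HasFDerivAt B (fderiv ℝ B (u, v)) (u, v) :=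
        (hB.differentiable (by simp) _).hasFDerivAt
      have h2 : HasDerivAt (fun v : ℝ => ((u, v) : ℝ × ℝ)) ((0 : ℝ), (1 : ℝ)) v :=
        (hasDerivAt_const v u).prodMk (hasDerivAt_id v)
      exact h1.comp_hasDerivAt v h2
    have hint : IntervalIntegrable (fun v => pv B (u, v)) MeasureTheory.volume 0 q :=
      (hcB.comp (Continuous.prodMk_right u)).intervalIntegrable 0 q
    rw [intervalIntegral.integral_eq_sub_of_hasDerivAt (fun v _ => hderiv v) hint]
    have : B (u, q) = B (u, 0) := by simpa using hBper (u, 0)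
    rw [this, sub_self]
  -- FTC in u for A
  have hAftc : ∀ v : ℝ, (∫ u in (0:ℝ)..p, pu A (u, v)) = 0 := by
    intro v
    have hderiv : ∀ u : ℝ, HasDerivAt (fun u => A (u, v)) (pu A (u, v)) u := by
      intro u
      have h1 : HasFDerivAt A (fderiv ℝ A (u, v)) (u, v) :=
        (hA.differentiable (by simp) _).hasFDerivAt
      have h2 : HasDerivAt (fun u : ℝ => ((u, v) : ℝ × ℝ)) ((1 : ℝ), (0 : ℝ)) u :=
        (hasDerivAt_id u).prodMk (hasDerivAt_const u v)
      exact h1.comp_hasDerivAt u h2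
    have hint : IntervalIntegrable (fun u => pu A (u, v)) MeasureTheory.volume 0 p :=
      (hcA.comp (continuous_id.prodMk continuous_const)).intervalIntegrable 0 p
    rw [intervalIntegral.integral_eq_sub_of_hasDerivAt (fun u _ => hderiv u) hint]
    have : A (p, v) = A (0, v) := by simpa using hAper (0, v)
    rw [this, sub_self]
  -- split the inner integral
  have hsplit : (∫ u in (0:ℝ)..p, ∫ v in (0:ℝ)..q, (pu A (u, v) + pv B (u, v)))
      = ∫ u in (0:ℝ)..p, ∫ v in (0:ℝ)..q, pu A (u, v) := by
    apply intervalIntegral.integral_congr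
    intro u _
    show (∫ v in (0:ℝ)..q, (pu A (u, v) + pv B (u, v)))
        = ∫ v in (0:ℝ)..q, pu A (u, v)
    have i1 : IntervalIntegrable (fun v => pu A (u, v)) MeasureTheory.volume 0 q :=
      (hcA.comp (Continuous.prodMk_right u)).intervalIntegrable 0 q
    have i2 : IntervalIntegrable (fun v => pv B (u, v)) MeasureTheory.volume 0 q :=
      (hcB.comp (Continuous.prodMk_right u)).intervalIntegrable 0 q
    rw [intervalIntegral.integral_add i1 i2, hBftc u, add_zero]
  rw [hsplit]
  -- Fubini
  have hswap : (∫ u in (0:ℝ)..p, ∫ v in (0:ℝ)..q, pu A (u, v))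
      = ∫ v in (0:ℝ)..q, ∫ u in (0:ℝ)..p, pu A (u, v) := by
    rw [intervalIntegral.integral_of_le hp.le, intervalIntegral.integral_of_le hq.le]
    simp_rw [intervalIntegral.integral_of_le hq.le, intervalIntegral.integral_of_le hp.le]
    apply MeasureTheory.integral_integral_swap
    have : MeasureTheory.IntegrableOn (pu A) (Set.Ioc 0 p ×ˢ Set.Ioc 0 q)
        (MeasureTheory.volume : MeasureTheory.Measure (ℝ × ℝ)) :=
      (hcA.continuousOn.integrableOn_compact (isCompact_Icc.prod isCompact_Icc)).mono_set
        (Set.prod_mono Set.Ioc_subset_Icc_self Set.Ioc_subset_Icc_self)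
    rw [MeasureTheory.Measure.volume_eq_prod] at this
    rw [MeasureTheory.Measure.prod_restrict]
    exact this
  rw [hswap]
  simp only [hAftc]
  simp
end
end
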